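/- Let x be a real number with x > 0. Suppose F : ℂ → ℂ is complex-differentiable at every point w ≠ 1 and satisfies F(w) = ∑_{n=0}^∞ (n + x)^(−w) for all complex w with Re(w) > 1. Then exp(−F′(0)) = √(2π)/Γ(x). -/

import Mathlib

/-!
For `1 < re s`, compare `∑ (n + x)^(-s)` with `∫_x^∞ t^(-s) dt` by the trapezoid rule on the
intervals `[n + x, n + x + 1]`. The error on each interval is `O(|s|^2 (n + x)^(-re s - 2))`, so
the sum of the errors is holomorphic on `re s > -1, s ≠ 1`; together with the explicit boundary
terms it continues the Hurwitz series there, and by the identity theorem it agrees with `F` near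
`0`. Differentiating term by term at `s = 0`, the partial sums telescope to
`(N + x - 1/2) log (N + x) - (N + x) - ∑_{n<N} log (n + x)` up to a constant, and Stirling's formula
together with Euler's limit formula for `Γ` gives the limit `log Γ(x) - log √(2π)`.
-/

open Complex Filter Topology Set intervalIntegral
open scoped Interval

theorem integral_mul_deriv_two_eq_trapezoid_sub_integral {f f' f'' : ℝ → ℂ} {a b : ℝ}
    (hf : ∀ t ∈ [[a, b]], HasDerivAt f (f' t) t)
    (hf' : ∀ t ∈ [[a, b]], HasDerivAt f' (f'' t) t)
    (hf'' : IntervalIntegrable f'' MeasureTheory.volume a b) :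
    ∫ t in a..b, (((t - a) * (b - t) / 2 : ℝ) : ℂ) * f'' t
      = (b - a) * (f a + f b) / 2 - ∫ t in a..b, f t := by
  have hK : ∀ t ∈ [[a, b]], HasDerivAt (fun t : ℝ => (((t - a) * (b - t) / 2 : ℝ) : ℂ))
      (((a + b - 2 * t) / 2 : ℝ) : ℂ) t := fun t _ => by
    have : HasDerivAt (fun t : ℝ => (t - a) * (b - t) / 2) ((a + b - 2 * t) / 2) t :=
      ((((hasDerivAt_id' t).sub_const a).mul ((hasDerivAt_id' t).const_sub b)).div_const 2)
        |>.congr_deriv (by ring)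
    exact this.ofReal_comp
  have hK' : ∀ t ∈ [[a, b]], HasDerivAt (fun t : ℝ => (((a + b - 2 * t) / 2 : ℝ) : ℂ)) (-1) t :=
    fun t _ => by
      have : HasDerivAt (fun t : ℝ => (a + b - 2 * t) / 2) (-1) t :=
        ((((hasDerivAt_id' t).const_mul 2).const_sub (a + b)).div_const 2).congr_deriv (by ring)
      simpa using this.ofReal_comp
  have hf'_int : IntervalIntegrable f' MeasureTheory.volume a b :=
    ContinuousOn.intervalIntegrable fun t ht => (hf' t ht).continuousAt.continuousWithinAt
  have hK'_int : IntervalIntegrable (fun t : ℝ => (((a + b - 2 * t) / 2 : ℝ) : ℂ))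
      MeasureTheory.volume a b := by
    apply Continuous.intervalIntegrable; fun_prop
  rw [integral_mul_deriv_eq_deriv_mul hK hf' hK'_int hf'',
    integral_mul_deriv_eq_deriv_mul hK' hf intervalIntegrable_const hf'_int]
  simp only [neg_one_mul, intervalIntegral.integral_neg]
  push_cast
  ring

theorem hasDerivAt_ofReal_cpow_const_of_pos {t : ℝ} (ht : 0 < t) (c : ℂ) :
    HasDerivAt (fun u : ℝ => (u : ℂ) ^ c) (c * (t : ℂ) ^ (c - 1)) t :=
  ((hasStrictDerivAt_cpow_const (ofReal_mem_slitPlane.2 ht)).hasDerivAt).comp_ofReal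

theorem Real.rpow_le_rpow_add_rpow {c lo e hi : ℝ} (hc : 0 < c) (hlo : lo ≤ e) (hhi : e ≤ hi) :
    c ^ e ≤ c ^ lo + c ^ hi := by
  rcases le_or_gt 1 c with h | h
  · linarith [Real.rpow_le_rpow_of_exponent_le h hhi, Real.rpow_nonneg hc.le lo]
  · linarith [Real.rpow_le_rpow_of_exponent_ge hc h.le hlo, Real.rpow_nonneg hc.le hi]

theorem summable_nat_add_rpow_neg {x : ℝ} (hx : 0 < x) {p : ℝ} (hp : 1 < p) :
    Summable (fun n : ℕ => ((n : ℝ) + x) ^ (-p)) :=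
  ((Real.summable_one_div_nat_add_rpow x p).2 hp).congr fun n => by
    rw [abs_of_pos (by positivity), one_div, Real.rpow_neg (by positivity)]

theorem summable_nat_add_cpow_neg {x : ℝ} (hx : 0 < x) {s : ℂ} (hs : 1 < s.re) :
    Summable (fun n : ℕ => ((n : ℂ) + x) ^ (-s)) :=
  .of_norm <| (summable_nat_add_rpow_neg hx hs).congr fun n => by
    rw [show ((n : ℂ) + x) = ((n + x : ℝ) : ℂ) by push_cast; rfl,
      norm_cpow_eq_rpow_re_of_pos (by positivity), neg_re]

theorem tendsto_nat_add_cpow_atTop_zero {x : ℝ} (hx : 0 < x) {c : ℂ} (hc : c.re < 0) :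
    Tendsto (fun n : ℕ => ((n : ℂ) + x) ^ c) atTop (𝓝 0) := by
  rw [tendsto_zero_iff_norm_tendsto_zero]
  have hnorm : ∀ n : ℕ, ‖((n : ℂ) + x) ^ c‖ = ((n : ℝ) + x) ^ (-(-c.re)) := fun n => by
    rw [neg_neg, ← norm_cpow_eq_rpow_re_of_pos (by positivity)]
    push_cast; rfl
  simp only [hnorm]
  exact (tendsto_rpow_neg_atTop (neg_pos.2 hc)).comp
    (tendsto_atTop_add_const_right _ x tendsto_natCast_atTop_atTop)

theorem tendsto_add_mul_log_add_sub_log (c x : ℝ) :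
    Tendsto (fun t : ℝ => (t + c) * (Real.log (t + x) - Real.log t)) atTop (𝓝 x) := by
  have hlog : Tendsto (fun t : ℝ => Real.log (1 + x / t)) atTop (𝓝 0) := by
    have h := (tendsto_const_nhds (x := x)).div_atTop tendsto_id |>.const_add 1
    simpa [Function.comp_def] using
      (Real.continuousAt_log (by norm_num : (1 + 0 : ℝ) ≠ 0)).tendsto.comp h
  refine (((Real.tendsto_mul_log_one_add_div_atTop x).add (hlog.const_mul c)).congr' ?_).trans
    (by simp)
  filter_upwards [eventually_gt_atTop (max 0 (-x))] with t ht
  rw [max_lt_iff] at ht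
  rw [← Real.log_div (by linarith) ht.1.ne', add_div, div_self ht.1.ne']
  ring

theorem eventuallyEq_nhds_zero_of_eq_of_one_lt_re {F G : ℂ → ℂ}
    (hF : ∀ w : ℂ, -1 < w.re → w ≠ 1 → DifferentiableAt ℂ F w)
    (hG : ∀ w : ℂ, -1 < w.re → w ≠ 1 → DifferentiableAt ℂ G w)
    (hFG : ∀ w : ℂ, 1 < w.re → F w = G w) : F =ᶠ[𝓝 0] G := by
  -- a convex open set containing `0` and points with `1 < re`, but avoiding `1`
  set D : Set ℂ := {w | -1 < w.re} ∩ {w | w.re - w.im < 1}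
  have hDopen : IsOpen D :=
    (isOpen_lt continuous_const continuous_re).inter (isOpen_lt (by fun_prop) continuous_const)
  have hDconv : Convex ℝ D :=
    (convex_halfSpace_re_gt _).inter <| convex_halfSpace_lt (reLm - imLm).isLinear _
  have hD1 : ∀ w ∈ D, w ≠ 1 := by rintro w ⟨-, hw⟩ rfl; simp at hw
  have hanalytic : ∀ {H : ℂ → ℂ}, (∀ w : ℂ, -1 < w.re → w ≠ 1 → DifferentiableAt ℂ H w) →
      AnalyticOnNhd ℂ H D := fun hH =>
    DifferentiableOn.analyticOnNhd (fun w hw => (hH w hw.1 (hD1 w hw)).differentiableWithinAt)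
      hDopen
  have hmem : (2 + 2 * I : ℂ) ∈ D := by constructor <;> norm_num
  have hnear : F =ᶠ[𝓝 (2 + 2 * I)] G := by
    filter_upwards [(isOpen_lt continuous_const continuous_re).mem_nhds
      (show (1 : ℝ) < (2 + 2 * I : ℂ).re by norm_num)] with w hw using hFG w hw
  have hEq := (hanalytic hF).eqOn_of_preconnected_of_eventuallyEq (hanalytic hG)
    hDconv.isPreconnected hmem hnear
  filter_upwards [hDopen.mem_nhds (show (0 : ℂ) ∈ D by constructor <;> simp)] with w hw
    using hEq hw

namespace Lerch

/-- `log Γ(a) = stirlingLog a + log √(2π) + o(1)` as `a → ∞`. -/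
noncomputable def stirlingLog (a : ℝ) : ℝ := (a - 1 / 2) * Real.log a - a

/-- For `1 < re s` this is `a^(-s) / 2 + ∫_a^∞ t^(-s) dt`, the trapezoid-rule value of
`∑_{n ≥ 0} (n + a)^(-s)`. -/
noncomputable def tailApprox (a : ℝ) (s : ℂ) : ℂ := (a : ℂ) ^ (-s) / 2 + (a : ℂ) ^ (1 - s) / (s - 1)

/-- The trapezoid rule for `∫_a^(a+1) t^(-s) dt` minus the integral (junk at `s = 1`). -/
noncomputable def trapezoidError (a : ℝ) (s : ℂ) : ℂ :=
  ((a : ℂ) ^ (-s) + ((a + 1 : ℝ) : ℂ) ^ (-s)) / 2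
    - ((a : ℂ) ^ (1 - s) - ((a + 1 : ℝ) : ℂ) ^ (1 - s)) / (s - 1)

noncomputable def hurwitzContinuation (x : ℝ) (s : ℂ) : ℂ :=
  tailApprox x s + ∑' n : ℕ, trapezoidError (n + x) s

theorem trapezoidError_eq (a : ℝ) (s : ℂ) :
    trapezoidError a s = (a : ℂ) ^ (-s) + tailApprox (a + 1) s - tailApprox a s := by
  rw [trapezoidError, tailApprox, tailApprox]
  ring

theorem trapezoidError_eq_integral {a : ℝ} (ha : 0 < a) {s : ℂ} (hs : s ≠ 1) :
    trapezoidError a s = ∫ t in a..a + 1,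
      (((t - a) * (a + 1 - t) / 2 : ℝ) : ℂ) * (s * (s + 1) * (t : ℂ) ^ (-s - 2)) := by
  have hpos : ∀ t ∈ [[a, a + 1]], 0 < t := fun t ht =>
    ha.trans_le (by rw [uIcc_of_le (by linarith)] at ht; exact ht.1)
  rw [integral_mul_deriv_two_eq_trapezoid_sub_integral (f := fun t : ℝ => (t : ℂ) ^ (-s))
    (f' := fun t : ℝ => -s * (t : ℂ) ^ (-s - 1))
    (fun t ht => hasDerivAt_ofReal_cpow_const_of_pos (hpos t ht) (-s))
    (fun t ht => ((hasDerivAt_ofReal_cpow_const_of_pos (hpos t ht) (-s - 1)).const_mul (-s))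
      |>.congr_deriv (by ring_nf))
    (ContinuousOn.intervalIntegrable fun t ht =>
      ((hasDerivAt_ofReal_cpow_const_of_pos (hpos t ht) (-s - 2)).continuousAt.const_mul
        _).continuousWithinAt),
    integral_cpow (Or.inr ⟨by simpa [neg_inj] using hs, fun h => (hpos 0 h).false⟩)]
  have hs' : 1 - s ≠ 0 := sub_ne_zero.2 hs.symm
  have hs'' : s - 1 ≠ 0 := sub_ne_zero.2 hs
  rw [trapezoidError, show -s + 1 = 1 - s by ring]
  push_cast
  field_simp
  ring

theorem norm_trapezoidError_le {a : ℝ} (ha : 0 < a) {s : ℂ} (hs : s ≠ 1) (hs2 : -2 ≤ s.re) :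
    ‖trapezoidError a s‖ ≤ ‖s‖ * ‖s + 1‖ / 8 * a ^ (-s.re - 2) := by
  rw [trapezoidError_eq_integral ha hs]
  refine (norm_integral_le_of_norm_le_const
    (C := ‖s‖ * ‖s + 1‖ / 8 * a ^ (-s.re - 2)) fun t ht => ?_).trans_eq (by simp)
  rw [uIoc_of_le (by linarith)] at ht
  have hkernel : ‖(((t - a) * (a + 1 - t) / 2 : ℝ) : ℂ)‖ ≤ 1 / 8 := by
    rw [norm_real, Real.norm_eq_abs, abs_le]
    constructor <;> nlinarith [sq_nonneg (2 * t - 2 * a - 1), ht.1, ht.2]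
  have hpow : ‖(t : ℂ) ^ (-s - 2)‖ ≤ a ^ (-s.re - 2) := by
    rw [norm_cpow_eq_rpow_re_of_pos (ha.trans ht.1)]
    exact Real.rpow_le_rpow_of_nonpos ha ht.1.le (by rw [sub_re, neg_re, re_ofNat]; linarith)
  calc ‖(((t - a) * (a + 1 - t) / 2 : ℝ) : ℂ) * (s * (s + 1) * (t : ℂ) ^ (-s - 2))‖
      = ‖(((t - a) * (a + 1 - t) / 2 : ℝ) : ℂ)‖ * (‖s‖ * ‖s + 1‖ * ‖(t : ℂ) ^ (-s - 2)‖) := by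
        simp only [norm_mul]
    _ ≤ 1 / 8 * (‖s‖ * ‖s + 1‖ * a ^ (-s.re - 2)) := by gcongr
    _ = ‖s‖ * ‖s + 1‖ / 8 * a ^ (-s.re - 2) := by ring

theorem differentiableAt_tailApprox {a : ℝ} (ha : 0 < a) {s : ℂ} (hs : s ≠ 1) :
    DifferentiableAt ℂ (tailApprox a) s := by
  have ha0 : (a : ℂ) ≠ 0 := ofReal_ne_zero.2 ha.ne'
  unfold tailApprox
  fun_prop (disch := first | exact Or.inl ha0 | exact sub_ne_zero.2 hs)

theorem differentiableAt_trapezoidError {a : ℝ} (ha : 0 < a) {s : ℂ} (hs : s ≠ 1) :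
    DifferentiableAt ℂ (trapezoidError a) s := by
  rw [funext (trapezoidError_eq a)]
  have ha0 : (a : ℂ) ≠ 0 := ofReal_ne_zero.2 ha.ne'
  exact ((differentiableAt_neg_iff.2 differentiableAt_id).const_cpow (Or.inl ha0)).add
    (differentiableAt_tailApprox (by linarith) hs) |>.sub (differentiableAt_tailApprox ha hs)

theorem hasDerivAt_cpow_neg_zero {a : ℝ} (ha : 0 < a) :
    HasDerivAt (fun s : ℂ => (a : ℂ) ^ (-s)) (-Real.log a : ℂ) 0 := by
  simpa [ofReal_log ha.le] using
    (hasDerivAt_neg (0 : ℂ)).const_cpow (c := (a : ℂ)) (Or.inl (ofReal_ne_zero.2 ha.ne'))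

theorem hasDerivAt_tailApprox_zero {a : ℝ} (ha : 0 < a) :
    HasDerivAt (tailApprox a) (stirlingLog a : ℂ) 0 := by
  have ha0 : (a : ℂ) ≠ 0 := ofReal_ne_zero.2 ha.ne'
  have H := ((hasDerivAt_cpow_neg_zero ha).div_const 2).add
    ((((hasDerivAt_id (0 : ℂ)).const_sub 1).const_cpow (Or.inl ha0)).div
      ((hasDerivAt_id (0 : ℂ)).sub_const 1) (by norm_num))
  refine (H.congr_deriv ?_).congr_of_eventuallyEq (.of_forall fun s => by simp [tailApprox])
  simp only [id_eq, sub_zero, zero_sub, cpow_one, stirlingLog]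
  push_cast
  rw [ofReal_log ha.le]
  ring

theorem hasDerivAt_trapezoidError_zero {a : ℝ} (ha : 0 < a) :
    HasDerivAt (trapezoidError a)
      ((stirlingLog (a + 1) - stirlingLog a - Real.log a : ℝ) : ℂ) 0 := by
  rw [funext (trapezoidError_eq a)]
  refine (((hasDerivAt_cpow_neg_zero ha).add (hasDerivAt_tailApprox_zero (by linarith))).sub
    (hasDerivAt_tailApprox_zero ha)).congr_deriv ?_
  push_cast
  ring

theorem exists_summable_bound_trapezoidError {x : ℝ} (hx : 0 < x) {z : ℂ} (hz : -1 < z.re) :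
    ∃ r > 0, ∃ u : ℕ → ℝ, Summable u ∧
      ∀ n : ℕ, ∀ w ∈ Metric.ball z r \ {1}, ‖trapezoidError (n + x) w‖ ≤ u n := by
  set r := (z.re + 1) / 2 with hr
  set C := (‖z‖ + r) * (‖z‖ + r + 1) / 8 with hC
  have hr0 : 0 < r := by linarith
  refine ⟨r, hr0, fun n => C * (((n : ℝ) + x) ^ (-(z.re + r) - 2)
    + ((n : ℝ) + x) ^ (-(z.re - r) - 2)), ?_, ?_⟩
  · refine .mul_left _ (.add ?_ ?_)
    · exact (summable_nat_add_rpow_neg hx (p := z.re + r + 2) (by linarith)).congr fun n => by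
        ring_nf
    · exact (summable_nat_add_rpow_neg hx (p := z.re - r + 2) (by linarith)).congr fun n => by
        ring_nf
  · rintro n w ⟨hw, hw1 : w ≠ 1⟩
    have hwz : ‖w - z‖ < r := by rwa [Metric.mem_ball, dist_eq] at hw
    have hre : |w.re - z.re| < r := (sub_re w z ▸ abs_re_le_norm (w - z)).trans_lt hwz
    have hnorm : ‖w‖ ≤ ‖z‖ + r := by linarith [norm_sub_norm_le w z]
    have hnorm1 : ‖w + 1‖ ≤ ‖z‖ + r + 1 := by linarith [norm_add_le w 1, norm_one (α := ℂ)]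
    obtain ⟨hre₁, hre₂⟩ := abs_lt.1 hre
    -- `n + x` may be below `1`, so neither extreme exponent alone bounds `(n + x)^(-re w - 2)`
    calc ‖trapezoidError (n + x) w‖ ≤ ‖w‖ * ‖w + 1‖ / 8 * ((n : ℝ) + x) ^ (-w.re - 2) :=
          norm_trapezoidError_le (by positivity) hw1 (by linarith)
      _ ≤ C * (((n : ℝ) + x) ^ (-(z.re + r) - 2) + ((n : ℝ) + x) ^ (-(z.re - r) - 2)) := by
          apply mul_le_mul _ (Real.rpow_le_rpow_add_rpow (by positivity) (by linarith)
            (by linarith)) (by positivity) (by positivity)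
          rw [hC]
          gcongr

section TrapezoidSeries

variable {x : ℝ} {z : ℂ}

theorem summable_trapezoidError (hx : 0 < x) (hz : -1 < z.re) (hz1 : z ≠ 1) :
    Summable (fun n : ℕ => trapezoidError (n + x) z) := by
  obtain ⟨r, hr, u, hu, hbound⟩ := exists_summable_bound_trapezoidError hx hz
  exact .of_norm_bounded hu fun n => hbound n z ⟨Metric.mem_ball_self hr, hz1⟩

theorem differentiableAt_tsum_trapezoidError (hx : 0 < x) (hz : -1 < z.re) (hz1 : z ≠ 1) :
    DifferentiableAt ℂ (fun s => ∑' n : ℕ, trapezoidError (n + x) s) z := by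
  obtain ⟨r, hr, u, hu, hbound⟩ := exists_summable_bound_trapezoidError hx hz
  have hopen : IsOpen (Metric.ball z r \ {1}) := Metric.isOpen_ball.sdiff isClosed_singleton
  refine (differentiableOn_tsum_of_summable_norm hu (fun n w hw =>
    (differentiableAt_trapezoidError (by positivity) hw.2).differentiableWithinAt) hopen
    hbound).differentiableAt (hopen.mem_nhds ⟨Metric.mem_ball_self hr, hz1⟩)

theorem hasSum_deriv_trapezoidError (hx : 0 < x) (hz : -1 < z.re) (hz1 : z ≠ 1) :
    HasSum (fun n : ℕ => deriv (trapezoidError (n + x)) z)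
      (deriv (fun s => ∑' n : ℕ, trapezoidError (n + x) s) z) := by
  obtain ⟨r, hr, u, hu, hbound⟩ := exists_summable_bound_trapezoidError hx hz
  exact hasSum_deriv_of_summable_norm hu (fun n w hw =>
    (differentiableAt_trapezoidError (by positivity) hw.2).differentiableWithinAt)
    (Metric.isOpen_ball.sdiff isClosed_singleton) hbound ⟨Metric.mem_ball_self hr, hz1⟩

end TrapezoidSeries

theorem sum_range_trapezoidError (x : ℝ) (s : ℂ) (N : ℕ) :
    ∑ n ∈ Finset.range N, trapezoidError (n + x) s
      = ∑ n ∈ Finset.range N, ((n : ℂ) + x) ^ (-s) + tailApprox (N + x) s - tailApprox x s := by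
  induction N with
  | zero => simp
  | succ N ih =>
    rw [Finset.sum_range_succ, Finset.sum_range_succ, ih, trapezoidError_eq, Nat.cast_succ,
      add_right_comm _ (1 : ℝ), ofReal_add, ofReal_natCast]
    ring

theorem tendsto_tailApprox_nat_add {x : ℝ} (hx : 0 < x) {s : ℂ} (hs : 1 < s.re) :
    Tendsto (fun N : ℕ => tailApprox (N + x) s) atTop (𝓝 0) := by
  have h1 := tendsto_nat_add_cpow_atTop_zero hx (c := -s) (by rw [neg_re]; linarith)
  have h2 := tendsto_nat_add_cpow_atTop_zero hx (c := 1 - s) (by rw [sub_re, one_re]; linarith)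
  simpa [tailApprox] using (h1.div_const 2).add (h2.div_const (s - 1))

theorem hasSum_trapezoidError {x : ℝ} (hx : 0 < x) {s : ℂ} (hs : 1 < s.re) :
    HasSum (fun n : ℕ => trapezoidError (n + x) s)
      (∑' n : ℕ, ((n : ℂ) + x) ^ (-s) - tailApprox x s) := by
  have hs1 : s ≠ 1 := by rintro rfl; simp at hs
  rw [(summable_trapezoidError hx (by linarith) hs1).hasSum_iff_tendsto_nat]
  simp only [sum_range_trapezoidError]
  simpa using ((summable_nat_add_cpow_neg hx hs).hasSum.tendsto_sum_nat.add
    (tendsto_tailApprox_nat_add hx hs)).sub_const (tailApprox x s)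

theorem hurwitzContinuation_eq_tsum {x : ℝ} (hx : 0 < x) {s : ℂ} (hs : 1 < s.re) :
    hurwitzContinuation x s = ∑' n : ℕ, ((n : ℂ) + x) ^ (-s) := by
  rw [hurwitzContinuation, (hasSum_trapezoidError hx hs).tsum_eq]
  ring

theorem differentiableAt_hurwitzContinuation {x : ℝ} (hx : 0 < x) {s : ℂ} (hs : -1 < s.re)
    (hs1 : s ≠ 1) : DifferentiableAt ℂ (hurwitzContinuation x) s :=
  (differentiableAt_tailApprox hx hs1).add (differentiableAt_tsum_trapezoidError hx hs hs1)

theorem stirlingLog_sub_sum_log_eq {x : ℝ} {N : ℕ} (hN : N ≠ 0) :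
    stirlingLog (N + x) - ∑ n ∈ Finset.range N, Real.log (n + x)
      = Real.BohrMollerup.logGammaSeq x N - Real.log (Stirling.stirlingSeq N) - Real.log 2 / 2
        - (x - (N + (x + 1 / 2)) * (Real.log (N + x) - Real.log N)) := by
  have hN0 : (N : ℝ) ≠ 0 := Nat.cast_ne_zero.2 hN
  rw [Stirling.log_stirlingSeq_formula, Real.BohrMollerup.logGammaSeq, Finset.sum_range_succ,
    Real.log_mul two_ne_zero hN0, Real.log_div hN0 (Real.exp_pos 1).ne', Real.log_exp,
    stirlingLog]
  simp only [add_comm x]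
  ring

theorem tendsto_stirlingLog_sub_sum_log {x : ℝ} (hx : 0 < x) :
    Tendsto (fun N : ℕ => stirlingLog (N + x) - ∑ n ∈ Finset.range N, Real.log (n + x)) atTop
      (𝓝 (Real.log (Real.Gamma x) - Real.log √(2 * Real.pi))) := by
  have hstirling : Tendsto (fun N : ℕ => Real.log (Stirling.stirlingSeq N)) atTop
      (𝓝 (Real.log √Real.pi)) :=
    (Real.continuousAt_log (by positivity)).tendsto.comp Stirling.tendsto_stirlingSeq_sqrt_pi
  have hrem := (tendsto_add_mul_log_add_sub_log (x + 1 / 2) x).comp tendsto_natCast_atTop_atTop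
  have hlim := (((Real.BohrMollerup.tendsto_log_gamma hx).sub hstirling).sub_const
    (Real.log 2 / 2)).sub ((tendsto_const_nhds (x := x)).sub hrem)
  rw [sub_self, sub_zero, Real.log_sqrt (by positivity)] at hlim
  rw [show Real.log (Real.Gamma x) - Real.log √(2 * Real.pi)
      = Real.log (Real.Gamma x) - Real.log Real.pi / 2 - Real.log 2 / 2 by
    rw [Real.log_sqrt (by positivity), Real.log_mul two_ne_zero Real.pi_ne_zero]; ring]
  refine hlim.congr' ?_
  filter_upwards [eventually_ne_atTop 0] with N hN
  exact (stirlingLog_sub_sum_log_eq hN).symm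

theorem sum_range_deriv_trapezoidError_zero {x : ℝ} (hx : 0 < x) (N : ℕ) :
    ∑ n ∈ Finset.range N, deriv (trapezoidError (n + x)) 0
      = ((stirlingLog (N + x) - ∑ n ∈ Finset.range N, Real.log (n + x) - stirlingLog x : ℝ) :
          ℂ) := by
  induction N with
  | zero => simp
  | succ N ih =>
    rw [Finset.sum_range_succ, ih, (hasDerivAt_trapezoidError_zero (by positivity)).deriv,
      Finset.sum_range_succ]
    push_cast
    ring_nf

theorem deriv_hurwitzContinuation_zero {x : ℝ} (hx : 0 < x) :
    deriv (hurwitzContinuation x) 0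
      = ((Real.log (Real.Gamma x) - Real.log √(2 * Real.pi) : ℝ) : ℂ) := by
  have hseries := (hasSum_deriv_trapezoidError hx (z := 0) (by simp) zero_ne_one).tendsto_sum_nat
  simp only [sum_range_deriv_trapezoidError_zero hx] at hseries
  have hderiv_tsum := tendsto_nhds_unique hseries
    ((continuous_ofReal.tendsto _).comp ((tendsto_stirlingLog_sub_sum_log hx).sub_const _))
  have hderiv : HasDerivAt (hurwitzContinuation x) _ 0 := (hasDerivAt_tailApprox_zero hx).add
    (differentiableAt_tsum_trapezoidError hx (by simp) zero_ne_one).hasDerivAt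
  rw [hderiv.deriv, hderiv_tsum]
  push_cast
  ring

end Lerch

/-- Lerch's 1894 formula: the zeta regularized product `∏_{n=0}^∞ (n + x) = √(2π)/Γ(x)`,
where the left-hand side is `exp(−F′(0))` for `F` the analytic continuation of the
Hurwitz zeta function `w ↦ ∑_{n=0}^∞ (n+x)^(−w)`. -/
theorem lerch_formula (x : ℝ) (hx : 0 < x) (F : ℂ → ℂ)
    (hF : ∀ w : ℂ, w ≠ 1 → DifferentiableAt ℂ F w)
    (hFeq : ∀ w : ℂ, 1 < w.re → F w = ∑' n : ℕ, ((n : ℂ) + (x : ℂ)) ^ (-w)) :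
    Complex.exp (-(deriv F 0)) = (Real.sqrt (2 * Real.pi) : ℂ) / Complex.Gamma (x : ℂ) := by
  have hFG : F =ᶠ[𝓝 0] Lerch.hurwitzContinuation x :=
    eventuallyEq_nhds_zero_of_eq_of_one_lt_re (fun w _ hw => hF w hw)
      (fun _ hw hw1 => Lerch.differentiableAt_hurwitzContinuation hx hw hw1)
      (fun w hw => (hFeq w hw).trans (Lerch.hurwitzContinuation_eq_tsum hx hw).symm)
  rw [hFG.deriv_eq, Lerch.deriv_hurwitzContinuation_zero hx, ← ofReal_neg, ← ofReal_exp, neg_sub,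
    Real.exp_sub, Real.exp_log (by positivity), Real.exp_log (Real.Gamma_pos_of_pos hx),
    ofReal_div, Gamma_ofReal]
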